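/- Fix k ∈ ℕ₊ and an integral polynomial progression P⃗(x,y) = (x, x+P₁(y), …, x+P_t(y)). Define 𝒫 = Span_ℝ{ P⃗^k(x,y) : x,y ∈ ℝ } ⊆ ℝ^{t+1}, where P⃗^k(x,y) = (x^k, (x+P₁(y))^k, …, (x+P_t(y))^k). Then 𝒫 equals Span_ℝ{ P⃗^j(x,y) : x,y ∈ ℝ, 1 ≤ j ≤ k }, and also equals Span_ℝ{ (binom(x,k), binom(x+P₁(y),k), …, binom(x+P_t(y),k)) : x,y ∈ ℝ }. -/

import Mathlib

/-!
For offset vectors `c y`, the polynomials `p` all of whose evaluation vectors `(p (x + c y i))ᵢ`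
lie in a fixed subspace form a translation-invariant subspace of `K[X]`. Expanding `p (X + r)` in
powers of `r` and separating coefficients (the identity holds for infinitely many `r`) shows that
such a subspace is closed under differentiation, so as soon as it contains `p` it contains every
polynomial of degree at most `deg p`. Hence the span of the evaluation vectors of `p` depends only
on `deg p`: `X ^ k` and `binomPoly k` both have degree `k`, and `X ^ j` lies below for `j ≤ k`.
-/

open Polynomial

noncomputable def binomPoly (k : ℕ) : Polynomial ℝ :=
  ((k.factorial : ℝ)⁻¹) • descPochhammer ℝ k

open Finset

theorem Submodule.mem_of_forall_sum_pow_smul_mem {K M : Type*} [Field K] [Infinite K]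
    [AddCommGroup M] [Module K M] (W : Submodule K M) {N : ℕ} (w : ℕ → M)
    (h : ∀ r : K, ∑ m ∈ range N, r ^ m • w m ∈ W) {m : ℕ} (hm : m < N) : w m ∈ W := by
  rw [← Submodule.Quotient.mk_eq_zero, ← Module.forall_dual_apply_eq_zero_iff K]
  intro φ
  have hf : ∑ m ∈ range N, C (φ (W.mkQ (w m))) * X ^ m = 0 := Polynomial.funext fun r => by
    have hr : φ (W.mkQ (∑ m ∈ range N, r ^ m • w m)) = 0 := by
      rw [(W.mkQ_apply _).trans ((Submodule.Quotient.mk_eq_zero W).2 (h r)), map_zero]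
    simp only [map_sum, map_smul, smul_eq_mul] at hr
    rw [eval_finsetSum, eval_zero, ← hr]
    simp only [eval_mul, eval_C, eval_pow, eval_X, mul_comm]
  simpa [finsetSum_coeff, coeff_C_mul_X_pow, hm] using congrArg (coeff · m) hf

theorem Polynomial.taylor_eq_sum_pow_smul_hasseDeriv {R : Type*} [CommSemiring R] (r : R)
    (p : R[X]) {N : ℕ} (hN : p.natDegree < N) :
    taylor r p = ∑ m ∈ range N, r ^ m • hasseDeriv m p := by
  ext i
  have hi : (hasseDeriv i p).natDegree < N := (natDegree_hasseDeriv_le p i).trans_lt (by omega)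
  rw [taylor_coeff, eval_eq_sum_range' hi, finsetSum_coeff]
  refine sum_congr rfl fun m _ => ?_
  rw [coeff_smul, hasseDeriv_coeff, hasseDeriv_coeff, smul_eq_mul, add_comm m i,
    Nat.choose_symm_add]
  ring

theorem Polynomial.derivative_mem_of_forall_taylor_mem {K : Type*} [Field K] [Infinite K]
    {Q : Submodule K K[X]} {p : K[X]} (h : ∀ r, taylor r p ∈ Q) : derivative p ∈ Q := by
  rw [← hasseDeriv_one']
  refine Q.mem_of_forall_sum_pow_smul_mem (N := p.natDegree + 2) (fun m => hasseDeriv m p)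
    (fun r => ?_) (by omega)
  rw [← taylor_eq_sum_pow_smul_hasseDeriv r p (by omega)]
  exact h r

theorem Polynomial.X_pow_natDegree_mem {K : Type*} [Field K] {Q : Submodule K K[X]} {p : K[X]}
    (hp : p ∈ Q) (hp0 : p ≠ 0) (hlow : ∀ i < p.natDegree, (X : K[X]) ^ i ∈ Q) :
    (X : K[X]) ^ p.natDegree ∈ Q := by
  have hsplit := p.as_sum_range_C_mul_X_pow
  rw [sum_range_succ, ← leadingCoeff, C_mul'] at hsplit
  have hlead : p.leadingCoeff • (X : K[X]) ^ p.natDegree ∈ Q := by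
    rw [eq_sub_of_add_eq' hsplit.symm]
    refine Q.sub_mem hp (Q.sum_mem fun i hi => ?_)
    rw [C_mul']
    exact Q.smul_mem _ (hlow i (mem_range.1 hi))
  simpa [hp0] using Q.smul_mem p.leadingCoeff⁻¹ hlead

theorem Polynomial.X_pow_mem_of_derivative_mem {K : Type*} [Field K] [CharZero K]
    {Q : Submodule K K[X]} (hQ : ∀ q ∈ Q, derivative q ∈ Q) {p : K[X]} (hp : p ∈ Q)
    (hp0 : p ≠ 0) {j : ℕ} (hj : j ≤ p.natDegree) : (X : K[X]) ^ j ∈ Q := by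
  have hlow : ∀ i < p.natDegree, (X : K[X]) ^ i ∈ Q := fun i hi => by
    have hd : p.natDegree ≠ 0 := by omega
    exact X_pow_mem_of_derivative_mem hQ (hQ p hp) (derivative_ne_zero.2 hd)
      (by rw [natDegree_derivative]; omega)
  rcases hj.lt_or_eq with hj | rfl
  · exact hlow j hj
  · exact X_pow_natDegree_mem hp hp0 hlow
termination_by p.natDegree
decreasing_by exact natDegree_derivative_lt hd

theorem Polynomial.degreeLE_degree_le_of_forall_taylor_mem {K : Type*} [Field K] [CharZero K]
    {Q : Submodule K K[X]} (hQ : ∀ r, ∀ q ∈ Q, taylor r q ∈ Q) {p : K[X]} (hp : p ∈ Q) :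
    degreeLE K p.degree ≤ Q := by
  classical
  rcases eq_or_ne p 0 with rfl | hp0
  · intro q hq
    rw [mem_degreeLE, degree_zero, le_bot_iff, degree_eq_bot] at hq
    exact hq ▸ Q.zero_mem
  rw [degree_eq_natDegree hp0, degreeLE_eq_span_X_pow, Submodule.span_le]
  intro _ hX
  obtain ⟨j, hj, rfl⟩ := Finset.mem_image.1 hX
  exact X_pow_mem_of_derivative_mem (fun q hq => derivative_mem_of_forall_taylor_mem
    (fun r => hQ r q hq)) hp hp0 (Nat.lt_succ_iff.1 (mem_range.1 hj))

section Translates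

variable {K ι Y : Type*} [Field K]

noncomputable def translateSpan (c : Y → ι → K) (p : K[X]) : Submodule K (ι → K) :=
  Submodule.span K {v | ∃ x y, v = fun i => p.eval (x + c y i)}

noncomputable def translatesIn (W : Submodule K (ι → K)) (c : Y → ι → K) : Submodule K K[X] :=
  ⨅ (x : K) (y : Y), W.comap (LinearMap.pi fun i => leval (x + c y i))

theorem mem_translatesIn {W : Submodule K (ι → K)} {c : Y → ι → K} {p : K[X]} :
    p ∈ translatesIn W c ↔ ∀ x y, (fun i => p.eval (x + c y i)) ∈ W := by
  simp only [translatesIn, Submodule.mem_iInf, Submodule.mem_comap]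
  rfl

theorem taylor_mem_translatesIn {W : Submodule K (ι → K)} {c : Y → ι → K} (r : K) {p : K[X]}
    (hp : p ∈ translatesIn W c) : taylor r p ∈ translatesIn W c := by
  rw [mem_translatesIn] at hp ⊢
  intro x y
  simpa only [taylor_eval, add_right_comm] using hp (x + r) y

theorem translateSpan_le_of_degree_le [CharZero K] (c : Y → ι → K) {p q : K[X]}
    (h : q.degree ≤ p.degree) : translateSpan c q ≤ translateSpan c p := by
  have hp : p ∈ translatesIn (translateSpan c p) c :=
    mem_translatesIn.2 fun x y => Submodule.subset_span ⟨x, y, rfl⟩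
  have hq := degreeLE_degree_le_of_forall_taylor_mem (fun r _ => taylor_mem_translatesIn r) hp
    (mem_degreeLE.2 h)
  rw [translateSpan, Submodule.span_le]
  rintro _ ⟨x, y, rfl⟩
  exact mem_translatesIn.1 hq x y

end Translates

theorem degree_binomPoly (k : ℕ) : (binomPoly k).degree = k := by
  rw [binomPoly, smul_eq_C_mul, degree_C_mul (by positivity), degree_eq_natDegree
    (monic_descPochhammer ℝ k).ne_zero, descPochhammer_natDegree]

theorem stmt9_general (t k : ℕ) (hk : 1 ≤ k) (P : Fin t → Polynomial ℝ) :
    (Submodule.span ℝ {v : Fin (t + 1) → ℝ | ∃ x y : ℝ,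
        v = fun i => (x + Fin.cases (0 : ℝ) (fun j => (P j).eval y) i) ^ k} =
      Submodule.span ℝ {v : Fin (t + 1) → ℝ | ∃ x y : ℝ, ∃ j : ℕ, 1 ≤ j ∧ j ≤ k ∧
        v = fun i => (x + Fin.cases (0 : ℝ) (fun j' => (P j').eval y) i) ^ j}) ∧
    (Submodule.span ℝ {v : Fin (t + 1) → ℝ | ∃ x y : ℝ,
        v = fun i => (x + Fin.cases (0 : ℝ) (fun j => (P j).eval y) i) ^ k} =
      Submodule.span ℝ {v : Fin (t + 1) → ℝ | ∃ x y : ℝ,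
        v = fun i => (binomPoly k).eval (x + Fin.cases (0 : ℝ) (fun j => (P j).eval y) i)}) := by
  set c : ℝ → Fin (t + 1) → ℝ := fun y => Fin.cases 0 fun j => (P j).eval y
  have hpow : ∀ j, translateSpan c (X ^ j) = Submodule.span ℝ {v | ∃ x y : ℝ,
      v = fun i => (x + c y i) ^ j} := by
    simp [translateSpan]
  refine ⟨le_antisymm ?_ ?_, ?_⟩
  · exact Submodule.span_mono fun v ⟨x, y, hv⟩ => ⟨x, y, k, hk, le_rfl, hv⟩
  · rw [← hpow, Submodule.span_le]
    rintro _ ⟨x, y, j, -, hj, rfl⟩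
    have hmem : (fun i => (x + c y i) ^ j) ∈ translateSpan c (X ^ j) :=
      Submodule.subset_span ⟨x, y, by simp⟩
    exact translateSpan_le_of_degree_le c (by simpa using hj) hmem
  · have hdeg : (binomPoly k).degree = (X ^ k : ℝ[X]).degree := by simp [degree_binomPoly]
    rw [← hpow]
    exact le_antisymm (translateSpan_le_of_degree_le c hdeg.ge)
      (translateSpan_le_of_degree_le c hdeg.le)

/-- Equivalent descriptions of the spaces `𝒫_k`: the span of the coordinatewise
`k`-th powers of the progression vector equals the span of all `j`-th powers for `1 ≤ j ≤ k`,
and also equals the span of the coordinatewise binomial vectors of degree `k`. -/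
theorem stmt9 (t k : ℕ) (hk : 1 ≤ k) (P : Fin t → Polynomial ℝ)
    (hint : ∀ i, (∀ n : ℤ, ∃ m : ℤ, (P i).eval (n : ℝ) = m) ∧ (P i).eval 0 = 0)
    (hinj : Function.Injective P) :
    (Submodule.span ℝ {v : Fin (t + 1) → ℝ | ∃ x y : ℝ,
        v = fun i => (x + Fin.cases (0 : ℝ) (fun j => (P j).eval y) i) ^ k} =
      Submodule.span ℝ {v : Fin (t + 1) → ℝ | ∃ x y : ℝ, ∃ j : ℕ, 1 ≤ j ∧ j ≤ k ∧
        v = fun i => (x + Fin.cases (0 : ℝ) (fun j' => (P j').eval y) i) ^ j}) ∧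
    (Submodule.span ℝ {v : Fin (t + 1) → ℝ | ∃ x y : ℝ,
        v = fun i => (x + Fin.cases (0 : ℝ) (fun j => (P j).eval y) i) ^ k} =
      Submodule.span ℝ {v : Fin (t + 1) → ℝ | ∃ x y : ℝ,
        v = fun i => (binomPoly k).eval (x + Fin.cases (0 : ℝ) (fun j => (P j).eval y) i)}) :=
  stmt9_general t k hk P
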